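/- A linear 2-form Λ on the total space of a vector bundle A → M is closed if and only if Λ = (λ^t)^* ω_can, where λ: TM → A^* is the vector bundle map covered by Λ, λ^t: A → T^*M is its fibrewise transpose, and ω_can is the canonical symplectic form on T^*M. -/

import Mathlib

/-- `k`-forms on `E` (as plain functions; multilinearity is a predicate). -/
abbrev Form (E : Type*) (k : ℕ) := E → (Fin k → E) → ℝ

variable {E F : Type*} [NormedAddCommGroup E] [NormedSpace ℝ E]
  [NormedAddCommGroup F] [NormedSpace ℝ F] {k : ℕ}

def IsSmoothAlt {P : Type*} [NormedAddCommGroup P] [NormedSpace ℝ P]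
    (α : Form P k) : Prop :=
  (∀ v, ContDiff ℝ (⊤ : ℕ∞) fun x => α x v) ∧
  ∀ x, ∃ A : AlternatingMap ℝ P ℝ (Fin k), ∀ v, α x v = A v

noncomputable def extDerivForm {P : Type*} [NormedAddCommGroup P] [NormedSpace ℝ P]
    (α : Form P k) : Form P (k + 1) :=
  fun x v => ∑ i : Fin (k + 1), (-1 : ℝ) ^ (i : ℕ) *
    fderiv ℝ (fun y => α y (v ∘ i.succAbove)) x (v i)

noncomputable def lieDeriv {P : Type*} [NormedAddCommGroup P] [NormedSpace ℝ P]
    (V : P → P) (α : Form P k) : Form P k :=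
  fun x v => fderiv ℝ (fun y => α y v) x (V x)
    + ∑ i : Fin k, α x (fun j => if j = i then fderiv ℝ V x (v i) else v j)

def euler : E × F → E × F := fun a => (0, a.2)

/-- Linearity of a 2-form on the total space of `A = E × F → E`. -/
def IsLinearForm (Λ : Form (E × F) 2) : Prop :=
  lieDeriv euler Λ = Λ

/-- `Λ` covers the bundle map `λ : TM → A^*`. -/
def Covers (Λ : Form (E × F) 2) (lam : E → E →L[ℝ] F →L[ℝ] ℝ) : Prop :=
  ∀ (x : E) (u : F) (v : E) (w w' : F),
    Λ (x, u) ![(v, w), ((0 : E), w')] = lam x v w'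

noncomputable def pb {G H : Type*} [NormedAddCommGroup G] [NormedSpace ℝ G]
    [NormedAddCommGroup H] [NormedSpace ℝ H]
    (f : G → H) (α : Form H k) : Form G k :=
  fun x v => α (f x) (fun i => fderiv ℝ f x (v i))

def thetaCan : Form (E × (E →L[ℝ] ℝ)) 1 :=
  fun ξ U => ξ.2 (U 0).1

noncomputable def omegaCan : Form (E × (E →L[ℝ] ℝ)) 2 :=
  -(extDerivForm thetaCan)

noncomputable abbrev instNACG2 : NormedAddCommGroup (E →L[ℝ] F →L[ℝ] ℝ) := inferInstance

noncomputable abbrev instNS2 : NormedSpace ℝ (E →L[ℝ] F →L[ℝ] ℝ) := inferInstance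

set_option maxHeartbeats 1000000
section Helpers

attribute [local instance] instNACG2 instNS2

variable {E F G : Type*} [NormedAddCommGroup E] [NormedSpace ℝ E]
  [NormedAddCommGroup F] [NormedSpace ℝ F] [NormedAddCommGroup G] [NormedSpace ℝ G]

lemma vec2_eq {P : Type*} (v : Fin 2 → P) : v = ![v 0, v 1] := by
  funext j; fin_cases j <;> rfl

lemma vec3_eq {P : Type*} (v : Fin 3 → P) : v = ![v 0, v 1, v 2] := by
  funext j; fin_cases j <;> rfl

lemma upd0 {P : Type*} (a b c : P) : Function.update ![a,b] 0 c = ![c,b] := by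
  funext j; fin_cases j <;> simp

lemma upd1 {P : Type*} (a b c : P) : Function.update ![a,b] 1 c = ![a,c] := by
  funext j; fin_cases j <;> simp [Function.update]

lemma comp_swap {P : Type*} (a b : P) :
    (![a,b]) ∘ ⇑(Equiv.swap (0:Fin 2) 1) = ![b,a] := by
  funext j; fin_cases j <;> simp

lemma comp_sa0 {P : Type*} (a b c : P) : ![a,b,c] ∘ (0:Fin 3).succAbove = ![b,c] := by
  funext j; fin_cases j <;> rfl

lemma comp_sa1 {P : Type*} (a b c : P) : ![a,b,c] ∘ (1:Fin 3).succAbove = ![a,c] := by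
  funext j; fin_cases j <;> rfl

lemma comp_sa2 {P : Type*} (a b c : P) : ![a,b,c] ∘ (2:Fin 3).succAbove = ![a,b] := by
  funext j; fin_cases j <;> rfl

lemma comp2_sa0 {P : Type*} (a b : P) : ![a,b] ∘ (0:Fin 2).succAbove = ![b] := by
  funext j; fin_cases j <;> rfl

lemma comp2_sa1 {P : Type*} (a b : P) : ![a,b] ∘ (1:Fin 2).succAbove = ![a] := by
  funext j; fin_cases j <;> rfl

lemma ite_fn0 {P : Type*} (a b c : P) :
    (fun j : Fin 2 => if j = 0 then c else ![a,b] j) = ![c, b] := by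
  funext j; fin_cases j <;> simp

lemma ite_fn1 {P : Type*} (a b c : P) :
    (fun j : Fin 2 => if j = 1 then c else ![a,b] j) = ![a, c] := by
  funext j; fin_cases j <;> simp

noncomputable def ev2 {H₁ H₂ G' : Type*} [NormedAddCommGroup H₁] [NormedSpace ℝ H₁]
    [NormedAddCommGroup H₂] [NormedSpace ℝ H₂] [NormedAddCommGroup G'] [NormedSpace ℝ G']
    (a : H₁) (b : H₂) : (H₁ →L[ℝ] H₂ →L[ℝ] G') →L[ℝ] G' :=
  (ContinuousLinearMap.apply ℝ G' b).comp (ContinuousLinearMap.apply ℝ (H₂ →L[ℝ] G') a)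

@[simp] lemma ev2_apply {H₁ H₂ G' : Type*} [NormedAddCommGroup H₁] [NormedSpace ℝ H₁]
    [NormedAddCommGroup H₂] [NormedSpace ℝ H₂] [NormedAddCommGroup G'] [NormedSpace ℝ G']
    (a : H₁) (b : H₂) (T : H₁ →L[ℝ] H₂ →L[ℝ] G') : ev2 a b T = T a b := rfl

noncomputable def flipCLM : (E →L[ℝ] F →L[ℝ] ℝ) →L[ℝ] (F →L[ℝ] E →L[ℝ] ℝ) :=
  (ContinuousLinearMap.flipₗᵢ ℝ E F ℝ).toLinearIsometry.toContinuousLinearMap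

@[simp] lemma flipCLM_apply (T : E →L[ℝ] F →L[ℝ] ℝ) : flipCLM T = T.flip := rfl

lemma hasFDerivAt_eval {φ : E → F →L[ℝ] G} {φ' : E →L[ℝ] F →L[ℝ] G} {x : E} (u : F)
    (hφ : HasFDerivAt φ φ' x) :
    HasFDerivAt (fun p : E × F => φ p.1 p.2)
      (((isBoundedBilinearMap_apply (𝕜 := ℝ) (E := F) (F := G)).deriv (φ x, u)).comp
        ((φ'.comp (ContinuousLinearMap.fst ℝ E F)).prod (ContinuousLinearMap.snd ℝ E F)))
      (x, u) := by
  have h1 : HasFDerivAt (fun p : E × F => (φ p.1, p.2))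
      ((φ'.comp (ContinuousLinearMap.fst ℝ E F)).prod (ContinuousLinearMap.snd ℝ E F)) (x, u) :=
    HasFDerivAt.prodMk (hφ.comp (x,u) (hasFDerivAt_fst (p := (x,u)))) hasFDerivAt_snd
  exact ((isBoundedBilinearMap_apply.hasFDerivAt (φ x, u)).comp (x,u) h1 : _)

variable {lam : E → E →L[ℝ] F →L[ℝ] ℝ}

lemma hasF_lam (hlam : ContDiff ℝ (⊤ : ℕ∞) lam) (a : E) (b : F) (p : E × F) :
    HasFDerivAt (fun q : E × F => lam q.1 a b)
      (((ev2 a b).comp (fderiv ℝ lam p.1)).comp (ContinuousLinearMap.fst ℝ E F)) p := by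
  have h1 := ((ev2 (G' := ℝ) a b).hasFDerivAt.comp p.1
    ((hlam.differentiable (by simp) p.1).hasFDerivAt))
  have h2 := h1.comp p (hasFDerivAt_fst (p := p))
  exact h2

lemma fderiv_lam_fst (hlam : ContDiff ℝ (⊤ : ℕ∞) lam) (a : E) (b : F) (p : E × F) (v : E) (w : F) :
    fderiv ℝ (fun q : E × F => lam q.1 a b) p (v, w) = fderiv ℝ lam p.1 v a b := by
  rw [(hasF_lam hlam a b p).fderiv]; rfl

lemma hasF_dl (hlam : ContDiff ℝ (⊤ : ℕ∞) lam) (a b : E) (x : E) (u : F) :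
    HasFDerivAt (fun q : E × F => fderiv ℝ lam q.1 a b q.2)
      (((isBoundedBilinearMap_apply (𝕜 := ℝ) (E := F) (F := ℝ)).deriv (fderiv ℝ lam x a b, u)).comp
        ((((ev2 a b).comp (fderiv ℝ (fderiv ℝ lam) x)).comp (ContinuousLinearMap.fst ℝ E F)).prod
          (ContinuousLinearMap.snd ℝ E F))) (x, u) := by
  have hDl : ContDiff ℝ (⊤ : ℕ∞) (fderiv ℝ lam) := hlam.fderiv_right (by simp)
  have hφ := ((ev2 (G' := F →L[ℝ] ℝ) a b).hasFDerivAt).comp x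
    ((hDl.differentiable (by simp) x).hasFDerivAt)
  have h := hasFDerivAt_eval u hφ
  exact h

lemma fderiv_Phi (hlam : ContDiff ℝ (⊤ : ℕ∞) lam) (a b : E × F) (p : E × F) (z : E × F) :
    fderiv ℝ (fun y : E × F => fderiv ℝ lam y.1 b.1 a.1 y.2 - fderiv ℝ lam y.1 a.1 b.1 y.2
        + lam y.1 a.1 b.2 - lam y.1 b.1 a.2) p z
      = (fderiv ℝ (fderiv ℝ lam) p.1 z.1 b.1 a.1 p.2 + fderiv ℝ lam p.1 b.1 a.1 z.2)
        - (fderiv ℝ (fderiv ℝ lam) p.1 z.1 a.1 b.1 p.2 + fderiv ℝ lam p.1 a.1 b.1 z.2)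
        + fderiv ℝ lam p.1 z.1 a.1 b.2 - fderiv ℝ lam p.1 z.1 b.1 a.2 := by
  have H1 := hasF_dl hlam b.1 a.1 p.1 p.2
  have H2 := hasF_dl hlam a.1 b.1 p.1 p.2
  have H3 := hasF_lam hlam a.1 b.2 p
  have H4 := hasF_lam hlam b.1 a.2 p
  have H := ((H1.sub H2).add H3).sub H4
  have H' : HasFDerivAt (fun y : E × F => fderiv ℝ lam y.1 b.1 a.1 y.2 - fderiv ℝ lam y.1 a.1 b.1 y.2
          + lam y.1 a.1 b.2 - lam y.1 b.1 a.2) _ p := H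
  rw [H'.fderiv]
  simp [IsBoundedBilinearMap.deriv_apply]
  abel

end Helpers

set_option maxHeartbeats 1000000

section Helpers2

attribute [local instance] instNACG2 instNS2

variable {E F : Type*} [NormedAddCommGroup E] [NormedSpace ℝ E]
  [NormedAddCommGroup F] [NormedSpace ℝ F]

lemma fderiv_snd_apply (c : E) (ξ η : E × (E →L[ℝ] ℝ)) :
    fderiv ℝ (fun y : E × (E →L[ℝ] ℝ) => y.2 c) ξ η = η.2 c := by
  have h : HasFDerivAt (fun y : E × (E →L[ℝ] ℝ) => y.2 c)
      ((ContinuousLinearMap.apply ℝ ℝ c).comp (ContinuousLinearMap.snd ℝ E (E →L[ℝ] ℝ))) ξ :=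
    ((ContinuousLinearMap.apply ℝ ℝ c).comp
      (ContinuousLinearMap.snd ℝ E (E →L[ℝ] ℝ))).hasFDerivAt
  rw [h.fderiv]; rfl

lemma omega_eval (ξ : E × (E →L[ℝ] ℝ)) (U : Fin 2 → E × (E →L[ℝ] ℝ)) :
    omegaCan ξ U = (U 1).2 (U 0).1 - (U 0).2 (U 1).1 := by
  have h0 : omegaCan (E := E) ξ U = -(extDerivForm thetaCan ξ U) := rfl
  rw [h0, vec2_eq U]
  unfold extDerivForm
  rw [Fin.sum_univ_two, comp2_sa0, comp2_sa1]
  unfold thetaCan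
  simp only [Matrix.cons_val_zero, Matrix.cons_val_one, Matrix.head_cons]
  rw [fderiv_snd_apply, fderiv_snd_apply]
  norm_num [sub_eq_add_neg]

variable {lam : E → E →L[ℝ] F →L[ℝ] ℝ}

lemma fderiv_f_apply (hlam : ContDiff ℝ (⊤ : ℕ∞) lam) (x : E) (u : F) (v : E) (w : F) :
    fderiv ℝ (fun a : E × F => (a.1, (lam a.1).flip a.2)) (x, u) (v, w)
      = (v, (fderiv ℝ lam x v).flip u + (lam x).flip w) := by
  have h0 : HasFDerivAt lam (fderiv ℝ lam x) x := (hlam.differentiable (by simp) x).hasFDerivAt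
  have h1 := ContinuousLinearMap.hasFDerivAt (𝕜 := ℝ)
    (E := E →L[ℝ] F →L[ℝ] ℝ) (F := F →L[ℝ] E →L[ℝ] ℝ)
    (flipCLM (E := E) (F := F)) (x := lam x)
  have hφ := h1.comp x h0
  have h2 := hasFDerivAt_eval u hφ
  have H := HasFDerivAt.prodMk (hasFDerivAt_fst (p := ((x,u) : E × F))) h2
  have H' : HasFDerivAt (fun a : E × F => (a.1, (lam a.1).flip a.2)) _ (x, u) := H
  rw [H'.fderiv]
  simp [IsBoundedBilinearMap.deriv_apply, Prod.ext_iff, flipCLM_apply]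
  abel

lemma fderiv_lam_fst' (hlam : ContDiff ℝ (⊤ : ℕ∞) lam) (a : E) (b : F) (p : E × F) (z : E × F) :
    fderiv ℝ (fun q : E × F => lam q.1 a b) p z = fderiv ℝ lam p.1 z.1 a b := by
  have h := fderiv_lam_fst hlam a b p z.1 z.2
  simpa using h

lemma fderiv_f_apply' (hlam : ContDiff ℝ (⊤ : ℕ∞) lam) (p z : E × F) :
    fderiv ℝ (fun a : E × F => (a.1, (lam a.1).flip a.2)) p z
      = (z.1, (fderiv ℝ lam p.1 z.1).flip p.2 + (lam p.1).flip z.2) := by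
  have h := fderiv_f_apply hlam p.1 p.2 z.1 z.2
  simpa using h

end Helpers2

set_option maxHeartbeats 4000000

/-- a linear 2-form `Λ` covering `λ : TM → A^*` is closed iff
`Λ = (λ^t)^* ω_can`, where `λ^t : A → T^*M` is the fibrewise transpose. -/
theorem linear_two_form_closed_iff
    (Λ : Form (E × F) 2) (lam : E → E →L[ℝ] F →L[ℝ] ℝ)
    (hΛsm : IsSmoothAlt Λ) (hlin : IsLinearForm Λ) (hcov : Covers Λ lam)
    (hlam : ContDiff ℝ (⊤ : ℕ∞) lam) :
    extDerivForm Λ = 0 ↔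
      Λ = pb (fun a : E × F => (a.1, (lam a.1).flip a.2)) omegaCan := by
  classical
  obtain ⟨hsm, halt⟩ := hΛsm
  -- pointwise multilinearity consequences
  have hcov' : ∀ (p : E × F) (v : E) (w w' : F),
      Λ p ![(v, w), ((0:E), w')] = lam p.1 v w' := by
    intro p v w w'
    have h := hcov p.1 p.2 v w w'
    simpa using h
  have hswap : ∀ (p a b : E × F), Λ p ![a, b] = -Λ p ![b, a] := by
    intro p a b
    obtain ⟨A, hA⟩ := halt p
    rw [hA, hA, ← comp_swap b a]
    exact A.map_swap _ (by decide)
  have hz0 : ∀ (p b : E × F), Λ p ![(0 : E × F), b] = 0 := by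
    intro p b
    obtain ⟨A, hA⟩ := halt p
    rw [hA]
    exact A.map_coord_zero (i := 0) (by simp)
  have hdec : ∀ (p a b : E × F), Λ p ![a, b]
      = Λ p ![(a.1, 0), (b.1, 0)] + lam p.1 a.1 b.2 - lam p.1 b.1 a.2 := by
    intro p a b
    obtain ⟨A, hA⟩ := halt p
    have add0 : ∀ (s t b' : E × F), A ![s + t, b'] = A ![s, b'] + A ![t, b'] := by
      intro s t b'
      have h := A.map_update_add ![s, b'] 0 s t
      simpa only [upd0] using h
    have add1 : ∀ (a' s t : E × F), A ![a', s + t] = A ![a', s] + A ![a', t] := by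
      intro a' s t
      have h := A.map_update_add ![a', s] 1 s t
      simpa only [upd1] using h
    have ea : a = (a.1, (0:F)) + ((0:E), a.2) := by ext <;> simp
    have eb : b = (b.1, (0:F)) + ((0:E), b.2) := by ext <;> simp
    have h1 : A ![a, b] = A ![(a.1,(0:F)), b] + A ![((0:E),a.2), b] := by
      conv_lhs => rw [ea]
      exact add0 _ _ _
    have h2 : A ![(a.1,(0:F)), b] = A ![(a.1,0),(b.1,(0:F))] + A ![(a.1,0),((0:E),b.2)] := by
      conv_lhs => rw [eb]
      exact add1 _ _ _
    have h3 : A ![((0:E),a.2), b] = A ![(0,a.2),(b.1,(0:F))] + A ![(0,a.2),((0:E),b.2)] := by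
      conv_lhs => rw [eb]
      exact add1 _ _ _
    have p1 : A ![(a.1,(0:F)),((0:E),b.2)] = lam p.1 a.1 b.2 := by
      rw [← hA]; exact hcov' p a.1 0 b.2
    have p2 : A ![((0:E),a.2),(b.1,(0:F))] = -(lam p.1 b.1 a.2) := by
      rw [← hA, hswap p _ _, hcov' p b.1 0 a.2]
    have p3 : A ![((0:E),a.2),((0:E),b.2)] = 0 := by
      rw [← hA]
      have h := hcov' p 0 a.2 b.2
      simpa using h
    rw [hA, hA, h1, h2, h3, p1, p2, p3]
    ring
  -- the Euler vector field as a continuous linear map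
  have heuler : (euler : E × F → E × F)
      = ⇑((ContinuousLinearMap.inr ℝ E F).comp (ContinuousLinearMap.snd ℝ E F)) := by
    funext a; simp [euler]
  have hEuler : ∀ (x : E) (u : F) (v₁ v₂ : E),
      fderiv ℝ (fun y => Λ y ![(v₁,(0:F)),(v₂,0)]) (x,u) ((0:E), u)
        = Λ (x,u) ![(v₁,0),(v₂,0)] := by
    intro x u v₁ v₂
    have h := congrFun (congrFun hlin (x,u)) ![(v₁,(0:F)),(v₂,0)]
    unfold lieDeriv at h
    rw [Fin.sum_univ_two, heuler, ContinuousLinearMap.fderiv] at h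
    simp only [Matrix.cons_val_zero, Matrix.cons_val_one, Matrix.head_cons,
      ContinuousLinearMap.coe_comp', Function.comp_apply, ContinuousLinearMap.coe_snd',
      ContinuousLinearMap.inr_apply, Prod.mk_zero_zero] at h
    rw [ite_fn0, ite_fn1] at h
    rw [hz0] at h
    have hz1 : Λ (x,u) ![((v₁,(0:F))), (0 : E × F)] = 0 := by
      rw [hswap, hz0]; simp
    rw [hz1] at h
    simpa using h
  have hB0 : ∀ (x : E) (v₁ v₂ : E), Λ (x,(0:F)) ![(v₁,(0:F)),(v₂,0)] = 0 := by
    intro x v₁ v₂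
    have h := hEuler x 0 v₁ v₂
    rw [Prod.mk_zero_zero, map_zero] at h
    exact h.symm
  -- the key fibrewise identity
  have key_iff_pb : (∀ (x : E) (u : F) (v₁ v₂ : E),
        Λ (x,u) ![(v₁,(0:F)),(v₂,(0:F))]
          = fderiv ℝ lam x v₂ v₁ u - fderiv ℝ lam x v₁ v₂ u)
      ↔ Λ = pb (fun a : E × F => (a.1, (lam a.1).flip a.2)) omegaCan := by
    have hpb : ∀ (p : E × F) (V : Fin 2 → E × F),
        pb (fun a : E × F => (a.1, (lam a.1).flip a.2)) omegaCan p V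
          = (fderiv ℝ lam p.1 (V 1).1 (V 0).1 p.2 + lam p.1 (V 0).1 (V 1).2)
            - (fderiv ℝ lam p.1 (V 0).1 (V 1).1 p.2 + lam p.1 (V 1).1 (V 0).2) := by
      intro p V
      unfold pb
      rw [omega_eval]
      have e0 := fderiv_f_apply' hlam p (V 0)
      have e1 := fderiv_f_apply' hlam p (V 1)
      rw [e0, e1]
      simp
    constructor
    · intro hkey
      funext p V
      rw [vec2_eq V, hpb p ![V 0, V 1], hdec p (V 0) (V 1)]
      have hk := hkey p.1 p.2 (V 0).1 (V 1).1
      rw [Prod.mk.eta] at hk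
      simp only [Matrix.cons_val_zero, Matrix.cons_val_one, Matrix.head_cons]
      rw [hk]
      ring
    · intro hp x u v₁ v₂
      rw [hp, hpb]
      simp
  -- closed → key
  have key_of_closed : extDerivForm Λ = 0 → ∀ (x : E) (u : F) (v₁ v₂ : E),
      Λ (x,u) ![(v₁,(0:F)),(v₂,(0:F))]
        = fderiv ℝ lam x v₂ v₁ u - fderiv ℝ lam x v₁ v₂ u := by
    intro hc x u v₁ v₂
    have hder : ∀ (q w : F),
        fderiv ℝ (fun y => Λ y ![(v₁,(0:F)),(v₂,0)]) (x, q) ((0:E), w)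
          = fderiv ℝ lam x v₂ v₁ w - fderiv ℝ lam x v₁ v₂ w := by
      intro q w
      have h := congrFun (congrFun hc (x,q)) ![((0:E),w),(v₁,(0:F)),(v₂,(0:F))]
      rw [show (0 : Form (E × F) 3) (x,q) ![((0:E),w),(v₁,(0:F)),(v₂,(0:F))] = 0 from rfl] at h
      unfold extDerivForm at h
      rw [Fin.sum_univ_three, comp_sa0, comp_sa1, comp_sa2] at h
      simp only [Matrix.cons_val_zero, Matrix.cons_val_one, Matrix.head_cons,
        Matrix.cons_val_two, Matrix.tail_cons] at h
      have e2 : (fun y : E × F => Λ y ![(((0:E),w)),((v₂,(0:F)))])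
          = fun y : E × F => -(lam y.1 v₂ w) := by
        funext y
        rw [hdec y ((0:E),w) (v₂,(0:F))]
        simp [hz0, Prod.mk_zero_zero]
      have e3 : (fun y : E × F => Λ y ![(((0:E),w)),((v₁,(0:F)))])
          = fun y : E × F => -(lam y.1 v₁ w) := by
        funext y
        rw [hdec y ((0:E),w) (v₁,(0:F))]
        simp [hz0, Prod.mk_zero_zero]
      rw [e2, e3, fderiv_fun_neg, fderiv_fun_neg] at h
      simp only [Matrix.cons_val_zero, Matrix.cons_val_one, Matrix.head_cons,
        ContinuousLinearMap.neg_apply] at h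
      rw [fderiv_lam_fst' hlam v₂ w (x,q) ((v₁,(0:F))),
        fderiv_lam_fst' hlam v₁ w (x,q) ((v₂,(0:F)))] at h
      norm_num at h
      linarith [h]
    have hgd : Differentiable ℝ (fun y => Λ y ![(v₁,(0:F)),(v₂,0)]) :=
      (hsm ![(v₁,(0:F)),(v₂,0)]).differentiable (by simp)
    set c : ℝ := fderiv ℝ lam x v₂ v₁ u - fderiv ℝ lam x v₁ v₂ u with hc'
    have hC : ∀ t : ℝ, HasDerivAt (fun s : ℝ => Λ (x, s • u) ![(v₁,(0:F)),(v₂,0)]) c t := by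
      intro t
      have hγ : HasDerivAt (fun s : ℝ => ((x, s • u) : E × F)) ((0:E), u) t := by
        refine HasDerivAt.prodMk (hasDerivAt_const t x) ?_
        simpa using (hasDerivAt_id t).smul_const u
      have hcomp := (hgd (x, t • u)).hasFDerivAt.comp_hasDerivAt t hγ
      rw [hder (t • u) u] at hcomp
      exact hcomp
    have hlin2 : ∀ t : ℝ, HasDerivAt
        (fun s : ℝ => Λ (x, s • u) ![(v₁,(0:F)),(v₂,0)] - s * c) 0 t := by
      intro t
      have h := (hC t).sub ((hasDerivAt_id t).mul_const c)
      simp only [one_mul, sub_self] at h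
      exact h
    have h10 := is_const_of_deriv_eq_zero
      (f := fun s : ℝ => Λ (x, s • u) ![(v₁,(0:F)),(v₂,0)] - s * c)
      (fun s => (hlin2 s).differentiableAt) (fun s => (hlin2 s).deriv) 1 0
    rw [one_smul, zero_smul] at h10
    rw [hB0 x v₁ v₂] at h10
    rw [hc']
    linarith [h10]
  -- key → closed
  have closed_of_key : (∀ (x : E) (u : F) (v₁ v₂ : E),
        Λ (x,u) ![(v₁,(0:F)),(v₂,(0:F))]
          = fderiv ℝ lam x v₂ v₁ u - fderiv ℝ lam x v₁ v₂ u)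
      → extDerivForm Λ = 0 := by
    intro hkey
    have hΛfun : ∀ (a b : E × F), (fun y : E × F => Λ y ![a, b])
        = fun y : E × F => fderiv ℝ lam y.1 b.1 a.1 y.2 - fderiv ℝ lam y.1 a.1 b.1 y.2
            + lam y.1 a.1 b.2 - lam y.1 b.1 a.2 := by
      intro a b
      funext y
      rw [hdec y a b]
      have hk := hkey y.1 y.2 a.1 b.1
      rw [Prod.mk.eta] at hk
      rw [hk]
    have hf : ∀ y, HasFDerivAt lam (fderiv ℝ lam y) y :=
      fun y => (hlam.differentiable (by simp) y).hasFDerivAt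
    funext p V
    have hx :=
      (((hlam.fderiv_right (by exact WithTop.coe_le_coe.mpr le_top)).differentiable one_ne_zero) p.1).hasFDerivAt
    have hsym :=
      fun a b => second_derivative_symmetric hf hx a b
    rw [show (0 : Form (E × F) 3) p V = 0 from rfl]
    rw [vec3_eq V]
    unfold extDerivForm
    rw [Fin.sum_univ_three, comp_sa0, comp_sa1, comp_sa2]
    simp only [Matrix.cons_val_zero, Matrix.cons_val_one, Matrix.head_cons,
      Matrix.cons_val_two, Matrix.tail_cons]
    rw [hΛfun (V 1) (V 2), hΛfun (V 0) (V 2), hΛfun (V 0) (V 1)]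
    rw [fderiv_Phi hlam (V 1) (V 2) p (V 0), fderiv_Phi hlam (V 0) (V 2) p (V 1),
      fderiv_Phi hlam (V 0) (V 1) p (V 2)]
    norm_num
    rw [hsym (V 1).1 (V 0).1, hsym (V 2).1 (V 1).1, hsym (V 2).1 (V 0).1]
    ring
  constructor
  · intro hc
    exact key_iff_pb.mp (key_of_closed hc)
  · intro hp
    exact closed_of_key (key_iff_pb.mpr hp)
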